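/- arXiv:1006.3881 — 2 statements merged into one kernel-verified Lean document; each statement's English description precedes it below -/
import Mathlib

section
/- (Vitali Covering Theorem, interlaced form) Let X = [a,b] and E ⊆ X, and let H be a Vitali covering of E by closed subintervals of X (i.e., H contains ∅ and for every x ∈ E and ε > 0 there is I ∈ H with x ∈ I and 0 < length(I) < ε). Then there exists a sequence (I_j) of pairwise disjoint closed intervals from H such that for every n, E ⊆ (⋃_{j≤n} I_j) ∪ (⋃_{j>n} S(I_j)), where for an interval I with endpoints c ≤ d, S(I) = [c − 2·length(I), d + 2·length(I)] ∩ X and S(∅) = ∅. -/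
open scoped Classical

/-- The length of a bounded interval: `sSup I - sInf I` (junk value `0` for the
empty set). For a closed interval `[c,d]` with `c ≤ d` this is `d - c`. -/
noncomputable def ilen (I : Set ℝ) : ℝ := sSup I - sInf I

/-- The enlargement `S(I)` of a closed interval `I` with endpoints `c ≤ d`
inside `X = [a,b]`: `S(I) = [c − 2·len(I), d + 2·len(I)] ∩ [a,b]`, with
`S(∅) = ∅`. -/
noncomputable def ienlarge (a b : ℝ) (I : Set ℝ) : Set ℝ :=
  if I = ∅ then ∅
  else Set.Icc (sInf I - 2 * ilen I) (sSup I + 2 * ilen I) ∩ Set.Icc a b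

/-!
The intervals are chosen greedily: at each stage take an interval of `H`, disjoint from those
chosen so far, whose length exceeds half the supremal length of all such intervals. They are
pairwise disjoint inside `[a,b]`, so their lengths tend to `0`. Hence a short interval `J ∈ H`
around a point `x ∈ E` missing the first `n + 1` chosen intervals cannot stay a candidate
forever: it meets a first chosen interval `I_k`, `k > n`. At stage `k` the interval `J` was still
a candidate, so `len J < 2 len I_k`, and therefore `x ∈ J ⊆ S(I_k)`.
-/

open Set MeasureTheory Function

section Greedy

variable {α : Type*} (H : Set (Set α)) (size : Set α → ℝ)

def greedyCandidates (U : Set α) : Set (Set α) := {J ∈ H | 0 < size J ∧ Disjoint J U}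

/-- The supremum of the candidate sizes need not be attained, hence the factor `1 / 2`. -/
noncomputable def greedyStep (U : Set α) : Set α :=
  if h : ∃ J ∈ greedyCandidates H size U, sSup (size '' greedyCandidates H size U) / 2 < size J
  then h.choose else ∅

noncomputable def greedySeq (n : ℕ) : Set α :=
  greedyStep H size (⋃ (j) (_ : j < n), greedySeq j)
termination_by n

variable {H size}

theorem greedyStep_mem_or_eq_empty (U : Set α) :
    greedyStep H size U ∈ greedyCandidates H size U ∨ greedyStep H size U = ∅ := by
  unfold greedyStep
  split_ifs with h
  · exact .inl h.choose_spec.1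
  · exact .inr rfl

theorem size_lt_two_mul_size_greedyStep (hbdd : BddAbove (size '' H)) {U J : Set α}
    (hJ : J ∈ greedyCandidates H size U) : size J < 2 * size (greedyStep H size U) := by
  set C := greedyCandidates H size U
  have hJC : size J ∈ size '' C := mem_image_of_mem size hJ
  have hJsup : size J ≤ sSup (size '' C) :=
    le_csSup (hbdd.mono (image_mono fun _ hK => hK.1)) hJC
  obtain ⟨_, ⟨K, hK, rfl⟩, hKC⟩ :=
    exists_lt_of_lt_csSup ⟨_, hJC⟩ (half_lt_self (hJ.2.1.trans_le hJsup))
  have hex : ∃ K ∈ C, sSup (size '' C) / 2 < size K := ⟨K, hK, hKC⟩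
  rw [greedyStep, dif_pos hex]
  linarith [hex.choose_spec.2]

theorem greedySeq_eq (n : ℕ) :
    greedySeq H size n = greedyStep H size (⋃ (j) (_ : j < n), greedySeq H size j) := by
  rw [greedySeq]

theorem mem_greedyCandidates_iUnion_greedySeq {J : Set α} {n : ℕ} :
    J ∈ greedyCandidates H size (⋃ (j) (_ : j < n), greedySeq H size j) ↔
      J ∈ H ∧ 0 < size J ∧ ∀ j < n, Disjoint J (greedySeq H size j) := by
  simp only [greedyCandidates, mem_ofPred_eq, disjoint_iUnion₂_right]

theorem greedySeq_mem_or_eq_empty (n : ℕ) :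
    greedySeq H size n ∈ H ∨ greedySeq H size n = ∅ := by
  rw [greedySeq_eq]
  exact (greedyStep_mem_or_eq_empty _).imp_left (·.1)

theorem greedySeq_mem (hH : ∅ ∈ H) (n : ℕ) : greedySeq H size n ∈ H :=
  (greedySeq_mem_or_eq_empty n).elim id (· ▸ hH)

theorem pairwise_disjoint_greedySeq : Pairwise (Disjoint on greedySeq H size) := by
  refine (pairwise_disjoint_on _).2 fun i j hij => ?_
  rw [greedySeq_eq j]
  rcases greedyStep_mem_or_eq_empty (⋃ (k) (_ : k < j), greedySeq H size k) with h | h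
  · exact ((mem_greedyCandidates_iUnion_greedySeq.1 h).2.2 i hij).symm
  · rw [h]
    exact disjoint_empty _

theorem size_lt_two_mul_size_greedySeq (hbdd : BddAbove (size '' H)) {J : Set α} {n : ℕ}
    (hJH : J ∈ H) (hJ : 0 < size J) (hdisj : ∀ j < n, Disjoint J (greedySeq H size j)) :
    size J < 2 * size (greedySeq H size n) := by
  rw [greedySeq_eq]
  exact size_lt_two_mul_size_greedyStep hbdd
    (mem_greedyCandidates_iUnion_greedySeq.2 ⟨hJH, hJ, hdisj⟩)

theorem exists_not_disjoint_and_size_lt_two_mul_size_greedySeq (hbdd : BddAbove (size '' H))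
    {J : Set α} (hJH : J ∈ H) (hJ : 0 < size J)
    (hmeet : ∃ k, ¬Disjoint J (greedySeq H size k)) :
    ∃ k, ¬Disjoint J (greedySeq H size k) ∧ size J < 2 * size (greedySeq H size k) := by
  refine ⟨Nat.find hmeet, Nat.find_spec hmeet, size_lt_two_mul_size_greedySeq hbdd hJH hJ ?_⟩
  intro j hj
  exact not_not.1 (Nat.find_min hmeet hj)

end Greedy

section Interval

theorem ilen_empty : ilen ∅ = 0 := by
  simp [ilen]

theorem ilen_Icc {c d : ℝ} (h : c ≤ d) : ilen (Icc c d) = d - c := by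
  rw [ilen, csSup_Icc h, csInf_Icc h]

theorem dist_le_ilen {s : Set ℝ} (hs : Bornology.IsBounded s) {x y : ℝ} (hx : x ∈ s)
    (hy : y ∈ s) : dist x y ≤ ilen s := by
  have := le_csSup hs.bddAbove hx
  have := le_csSup hs.bddAbove hy
  have := csInf_le hs.bddBelow hx
  have := csInf_le hs.bddBelow hy
  rw [Real.dist_eq, abs_sub_le_iff, ilen]
  constructor <;> linarith

theorem mem_ienlarge_of_dist_le {a b x y : ℝ} {I : Set ℝ} (hI : Bornology.IsBounded I)
    (hy : y ∈ I) (hx : x ∈ Icc a b) (hxy : dist x y ≤ 2 * ilen I) : x ∈ ienlarge a b I := by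
  rw [ienlarge, if_neg (nonempty_of_mem hy).ne_empty]
  have := le_csSup hI.bddAbove hy
  have := csInf_le hI.bddBelow hy
  rw [Real.dist_eq, abs_sub_le_iff] at hxy
  exact ⟨⟨by linarith, by linarith⟩, hx⟩

def IsSubinterval (a b : ℝ) (I : Set ℝ) : Prop :=
  I = ∅ ∨ ∃ c d : ℝ, c ≤ d ∧ I = Icc c d ∧ I ⊆ Icc a b

namespace IsSubinterval

variable {a b : ℝ} {I : Set ℝ}

theorem empty : IsSubinterval a b ∅ := .inl rfl

theorem subset_Icc (hI : IsSubinterval a b I) : I ⊆ Icc a b := by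
  rcases hI with rfl | ⟨c, d, -, -, h⟩
  exacts [empty_subset _, h]

theorem isClosed (hI : IsSubinterval a b I) : IsClosed I := by
  rcases hI with rfl | ⟨c, d, -, rfl, -⟩
  exacts [isClosed_empty, isClosed_Icc]

theorem isBounded (hI : IsSubinterval a b I) : Bornology.IsBounded I :=
  Metric.isBounded_Icc a b |>.subset hI.subset_Icc

theorem volume_eq (hI : IsSubinterval a b I) : volume I = ENNReal.ofReal (ilen I) := by
  rcases hI with rfl | ⟨c, d, hcd, rfl, -⟩
  · simp [ilen_empty]
  · rw [Real.volume_Icc, ilen_Icc hcd]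

theorem ilen_le (hI : IsSubinterval a b I) : ilen I ≤ max (b - a) 0 := by
  rcases hI with rfl | ⟨c, d, hcd, rfl, h⟩
  · simp [ilen_empty]
  · rw [ilen_Icc hcd]
    have := (Icc_subset_Icc_iff hcd).1 h
    exact le_max_of_le_left (by linarith)

end IsSubinterval

end Interval

section Vitali

variable {a b : ℝ} {H : Set (Set ℝ)}

theorem bddAbove_ilen_image (hH : ∀ I ∈ H, IsSubinterval a b I) : BddAbove (ilen '' H) :=
  ⟨max (b - a) 0, forall_mem_image.2 fun I hI => (hH I hI).ilen_le⟩

theorem isSubinterval_greedySeq (hH : ∀ I ∈ H, IsSubinterval a b I) (n : ℕ) :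
    IsSubinterval a b (greedySeq H ilen n) :=
  (greedySeq_mem_or_eq_empty n).elim (hH _) (· ▸ .empty)

theorem exists_not_disjoint_greedySeq (hH : ∀ I ∈ H, IsSubinterval a b I) {J : Set ℝ}
    (hJH : J ∈ H) (hJ : 0 < ilen J) : ∃ k, ¬Disjoint J (greedySeq H ilen k) := by
  by_contra! hdisj
  have hlarge : ∀ k, ENNReal.ofReal (ilen J / 2) ≤ volume (greedySeq H ilen k) := by
    intro k
    rw [(isSubinterval_greedySeq hH k).volume_eq]
    refine ENNReal.ofReal_le_ofReal ?_
    linarith [size_lt_two_mul_size_greedySeq (n := k) (bddAbove_ilen_image hH) hJH hJ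
      fun j _ => hdisj j]
  have hfinite : volume (⋃ k, greedySeq H ilen k) ≠ ⊤ :=
    ne_top_of_le_ne_top measure_Icc_lt_top.ne
      (measure_mono (iUnion_subset fun k => (isSubinterval_greedySeq hH k).subset_Icc))
  have := Measure.finite_const_le_meas_of_disjoint_iUnion volume
    (ENNReal.ofReal_pos.2 (half_pos hJ))
    (fun k => (isSubinterval_greedySeq hH k).isClosed.measurableSet)
    pairwise_disjoint_greedySeq hfinite
  exact infinite_univ (this.subset fun k _ => hlarge k)

theorem mem_iUnion_ienlarge_greedySeq (hH : ∀ I ∈ H, IsSubinterval a b I) {x : ℝ}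
    (hVitali : ∀ ε : ℝ, 0 < ε → ∃ I ∈ H, x ∈ I ∧ 0 < ilen I ∧ ilen I < ε)
    (hx : x ∈ Icc a b) {n : ℕ} (hxn : x ∉ ⋃ (j) (_ : j ≤ n), greedySeq H ilen j) :
    x ∈ ⋃ (j) (_ : n < j), ienlarge a b (greedySeq H ilen j) := by
  have hclosed : IsClosed (⋃ (j) (_ : j ≤ n), greedySeq H ilen j) :=
    (finite_Iic n).isClosed_biUnion fun j _ => (isSubinterval_greedySeq hH j).isClosed
  obtain ⟨ε, hε, hball⟩ := Metric.isOpen_iff.1 hclosed.isOpen_compl x hxn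
  obtain ⟨J, hJH, hxJ, hJ, hJε⟩ := hVitali ε hε
  have hJb := (hH J hJH).isBounded
  have hJn : ∀ j ≤ n, Disjoint J (greedySeq H ilen j) := by
    have : J ⊆ (⋃ (j) (_ : j ≤ n), greedySeq H ilen j)ᶜ := fun y hy =>
      hball (Metric.mem_ball.2 ((dist_le_ilen hJb hy hxJ).trans_lt hJε))
    exact disjoint_iUnion₂_right.1 (subset_compl_iff_disjoint_right.1 this)
  obtain ⟨k, hmeet, hk⟩ := exists_not_disjoint_and_size_lt_two_mul_size_greedySeq
    (bddAbove_ilen_image hH) hJH hJ (exists_not_disjoint_greedySeq hH hJH hJ)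
  obtain ⟨y, hyJ, hyk⟩ := not_disjoint_iff.1 hmeet
  refine mem_iUnion₂.2 ⟨k, lt_of_not_ge fun hkn => hmeet (hJn k hkn), ?_⟩
  exact mem_ienlarge_of_dist_le (isSubinterval_greedySeq hH k).isBounded hyk hx
    ((dist_le_ilen hJb hxJ hyJ).trans hk.le)

end Vitali

theorem vitali_interlaced_cover_general (a b : ℝ)
    (E : Set ℝ) (hE : E ⊆ Set.Icc a b) (H : Set (Set ℝ))
    (hHsub : ∀ I ∈ H, I = ∅ ∨ ∃ c d : ℝ, c ≤ d ∧ I = Set.Icc c d ∧ I ⊆ Set.Icc a b)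
    (hHempty : ∅ ∈ H)
    (hVitali : ∀ x ∈ E, ∀ ε : ℝ, 0 < ε →
      ∃ I ∈ H, x ∈ I ∧ 0 < ilen I ∧ ilen I < ε) :
    ∃ I : ℕ → Set ℝ, (∀ j, I j ∈ H) ∧ Pairwise (Function.onFun Disjoint I) ∧
      ∀ n : ℕ, E ⊆ (⋃ (j) (_ : j ≤ n), I j) ∪ ⋃ (j) (_ : n < j), ienlarge a b (I j) :=
  ⟨greedySeq H ilen, greedySeq_mem hHempty, pairwise_disjoint_greedySeq, fun _ x hx =>
    or_iff_not_imp_left.2 (mem_iUnion_ienlarge_greedySeq hHsub (hVitali x hx) (hE hx))⟩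

/-- Vitali covering theorem, interlaced form: if `H` is a Vitali
covering of `E ⊆ [a,b]` by closed subintervals of `[a,b]`, then there is a
sequence of pairwise disjoint intervals `I_j ∈ H` such that for every `n`,
`E ⊆ (⋃_{j≤n} I_j) ∪ (⋃_{j>n} S(I_j))`. -/
theorem vitali_interlaced_cover (a b : ℝ) (hab : a ≤ b)
    (E : Set ℝ) (hE : E ⊆ Set.Icc a b) (H : Set (Set ℝ))
    (hHsub : ∀ I ∈ H, I = ∅ ∨ ∃ c d : ℝ, c ≤ d ∧ I = Set.Icc c d ∧ I ⊆ Set.Icc a b)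
    (hHempty : ∅ ∈ H)
    (hVitali : ∀ x ∈ E, ∀ ε : ℝ, 0 < ε →
      ∃ I ∈ H, x ∈ I ∧ 0 < ilen I ∧ ilen I < ε) :
    ∃ I : ℕ → Set ℝ, (∀ j, I j ∈ H) ∧ Pairwise (Function.onFun Disjoint I) ∧
      ∀ n : ℕ, E ⊆ (⋃ (j) (_ : j ≤ n), I j) ∪ ⋃ (j) (_ : n < j), ienlarge a b (I j) :=
  vitali_interlaced_cover_general a b E hE H hHsub hHempty hVitali
end

section
/- (Fubini's theorem on differentiation of series) Let h_n be a sequence of increasing (nondecreasing) real functions on a closed bounded interval X = [a,b] such that the series Σ_n h_n(x) converges to a finite value h(x) for every x ∈ X. Then there is a Lebesgue null set D such that h is differentiable at every x ∈ X \ D and Σ_n h_n'(x) = h'(x) for all x ∈ X \ D. -/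
/-!
Since every tail `h - ∑_{n<N} h_n` is monotone, its derivative is nonnegative, which gives
`∑ h_n' ≤ h'` almost everywhere. Choosing `N_k` with tails `g_k = h - ∑_{n<N_k} h_n ≤ 2⁻ᵏ`, the
same inequality for the convergent series `∑ g_k` shows that `∑ g_k'` converges, so `g_k' → 0`:
the partial sums of `∑ h_n'` converge to `h'` along `N_k`.
To work on all of `ℝ`, the `h_n` are first extended to be constant outside `[a, b]`.
-/

open MeasureTheory Filter Set Topology Finset

lemma monotone_of_hasSum {ι : Type*} {f : ι → ℝ → ℝ} {F : ℝ → ℝ} (hf : ∀ n, Monotone (f n))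
    (hF : ∀ x, HasSum (fun n => f n x) (F x)) : Monotone F :=
  fun _ _ hxy => hasSum_le (fun n => hf n hxy) (hF _) (hF _)

lemma monotone_sub_sum_range {f : ℕ → ℝ → ℝ} {F : ℝ → ℝ} (hf : ∀ n, Monotone (f n))
    (hF : ∀ x, HasSum (fun n => f n x) (F x)) (N : ℕ) :
    Monotone fun x => F x - ∑ n ∈ range N, f n x :=
  monotone_of_hasSum (fun n => hf (n + N)) fun x => (hasSum_nat_add_iff' N).2 (hF x)

lemma hasDerivAt_sub_sum_range {f : ℕ → ℝ → ℝ} {F : ℝ → ℝ} {x : ℝ}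
    (hfx : ∀ n, DifferentiableAt ℝ (f n) x) (hFx : DifferentiableAt ℝ F x) (N : ℕ) :
    HasDerivAt (fun y => F y - ∑ n ∈ range N, f n y)
      (deriv F x - ∑ n ∈ range N, deriv (f n) x) x :=
  hFx.hasDerivAt.sub (HasDerivAt.fun_sum fun n _ => (hfx n).hasDerivAt)

lemma sum_range_deriv_le_deriv_of_hasSum {f : ℕ → ℝ → ℝ} {F : ℝ → ℝ}
    (hf : ∀ n, Monotone (f n)) (hF : ∀ x, HasSum (fun n => f n x) (F x)) {x : ℝ}
    (hfx : ∀ n, DifferentiableAt ℝ (f n) x) (hFx : DifferentiableAt ℝ F x) (N : ℕ) :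
    ∑ n ∈ range N, deriv (f n) x ≤ deriv F x := by
  have h := (monotone_sub_sum_range hf hF N).deriv_nonneg (x := x)
  rw [(hasDerivAt_sub_sum_range hfx hFx N).deriv] at h
  linarith

lemma hasSum_of_sum_range_le_of_tendsto {ι : Type*} {l : Filter ι} [l.NeBot] {d : ℕ → ℝ} {s : ℝ}
    {N : ι → ℕ} (hd : ∀ n, 0 ≤ d n) (hle : ∀ M, ∑ n ∈ range M, d n ≤ s)
    (hlim : Tendsto (fun k => ∑ n ∈ range (N k), d n) l (𝓝 s)) : HasSum d s := by
  have hd_sum : Summable d := summable_of_sum_range_le hd hle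
  have htsum : ∑' n, d n = s := le_antisymm (Real.tsum_le_of_sum_range_le hd hle)
    (le_of_tendsto' hlim fun k => hd_sum.sum_le_tsum _ fun n _ => hd n)
  exact htsum ▸ hd_sum.hasSum

theorem ae_hasSum_deriv_of_monotone {f : ℕ → ℝ → ℝ} {F : ℝ → ℝ} {b : ℝ}
    (hf : ∀ n, Monotone (f n)) (hF : ∀ x, HasSum (fun n => f n x) (F x))
    (hf_nonneg : ∀ n x, 0 ≤ f n x) (hf_le : ∀ n x, f n x ≤ f n b) :
    ∀ᵐ x, (∀ n, DifferentiableAt ℝ (f n) x) ∧ DifferentiableAt ℝ F x ∧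
      HasSum (fun n => deriv (f n) x) (deriv F x) := by
  choose N hN using fun k : ℕ => ((hF b).tendsto_sum_nat.eventually
    (lt_mem_nhds (sub_lt_self (F b) (pow_pos one_half_pos k)))).exists
  -- The tails `g k` are at most `2⁻ᵏ` everywhere, so `∑ k, g k` converges to a monotone function.
  set g : ℕ → ℝ → ℝ := fun k x => F x - ∑ n ∈ range (N k), f n x
  have hg : ∀ k, Monotone (g k) := fun k => monotone_sub_sum_range hf hF (N k)
  have hg_tail : ∀ k x, HasSum (fun n => f (n + N k) x) (g k x) := fun k x =>
    (hasSum_nat_add_iff' (N k)).2 (hF x)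
  have hg_nonneg : ∀ k x, 0 ≤ g k x := fun k x =>
    (hg_tail k x).nonneg fun n => hf_nonneg _ x
  have hg_le : ∀ k x, g k x ≤ (1 / 2 : ℝ) ^ k := fun k x =>
    (hasSum_le (fun n => hf_le _ x) (hg_tail k x) (hg_tail k b)).trans (by linarith [hN k])
  have hG : ∀ x, HasSum (fun k => g k x) (∑' k, g k x) := fun x =>
    (summable_geometric_two.of_nonneg_of_le (hg_nonneg · x) (hg_le · x)).hasSum
  filter_upwards [ae_all_iff.2 fun n => (hf n).ae_differentiableAt,
    (monotone_of_hasSum hf hF).ae_differentiableAt,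
    (monotone_of_hasSum hg hG).ae_differentiableAt] with x hfx hFx hGx
  refine ⟨hfx, hFx, hasSum_of_sum_range_le_of_tendsto (l := atTop) (N := N)
    (fun n => (hf n).deriv_nonneg) (sum_range_deriv_le_deriv_of_hasSum hf hF hfx hFx) ?_⟩
  have hg_deriv : ∀ k, HasDerivAt (g k) (deriv F x - ∑ n ∈ range (N k), deriv (f n) x) x :=
    fun k => hasDerivAt_sub_sum_range hfx hFx (N k)
  have hg_deriv_summable : Summable fun k => deriv (g k) x :=
    summable_of_sum_range_le (fun k => (hg k).deriv_nonneg)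
      (sum_range_deriv_le_deriv_of_hasSum hg hG (fun k => (hg_deriv k).differentiableAt) hGx)
  have h := (tendsto_const_nhds (x := deriv F x)).sub hg_deriv_summable.tendsto_atTop_zero
  simpa only [(hg_deriv _).deriv, sub_sub_cancel, sub_zero] using h

lemma IccExtend_comp_val_eventuallyEq {α β : Type*} [LinearOrder α] [TopologicalSpace α]
    [OrderTopology α] {a b x : α} (hab : a ≤ b) (u : α → β) (hx : x ∈ Ioo a b) :
    IccExtend hab (u ∘ Subtype.val) =ᶠ[𝓝 x] u :=
  eventually_of_mem (Ioo_mem_nhds hx.1 hx.2) fun _ hy =>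
    IccExtend_of_mem hab _ (Ioo_subset_Icc_self hy)

/-- Fubini's theorem on differentiation of series of monotone
functions: if `h n` are nondecreasing functions on `[a,b]` and the series
`Σ_n h n x` converges to `H x` for every `x ∈ [a,b]`, then there is a Lebesgue
null set `D` such that at every `x ∈ [a,b] \ D` all the derivatives `(h n)'(x)`
and `H'(x)` exist and `Σ_n (h n)'(x) = H'(x)`. -/
theorem fubini_differentiation_of_series (a b : ℝ) (hab : a ≤ b)
    (h : ℕ → ℝ → ℝ) (H : ℝ → ℝ)
    (hmono : ∀ n, MonotoneOn (h n) (Set.Icc a b))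
    (hsum : ∀ x ∈ Set.Icc a b, HasSum (fun n => h n x) (H x)) :
    ∃ D : Set ℝ, MeasureTheory.volume D = 0 ∧
      ∀ x ∈ Set.Icc a b \ D, ∃ (d : ℕ → ℝ) (s : ℝ),
        (∀ n, HasDerivWithinAt (h n) (d n) (Set.Icc a b) x) ∧
        HasDerivWithinAt H s (Set.Icc a b) x ∧ HasSum d s := by
  set f : ℕ → ℝ → ℝ := fun n x => IccExtend hab (h n ∘ Subtype.val) x - h n a
  set F : ℝ → ℝ := fun x => IccExtend hab (H ∘ Subtype.val) x - H a
  have ha : a ∈ Icc a b := left_mem_Icc.2 hab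
  have hf : ∀ n, Monotone (f n) := fun n _ _ hxy =>
    sub_le_sub_right ((hmono n).monotone.IccExtend hab hxy) _
  have hF : ∀ x, HasSum (fun n => f n x) (F x) := fun x =>
    (hsum _ (projIcc a b hab x).2).sub (hsum a ha)
  have hf_nonneg : ∀ n x, 0 ≤ f n x := fun n x =>
    sub_nonneg.2 (hmono n ha (projIcc a b hab x).2 (projIcc a b hab x).2.1)
  have hf_le : ∀ n x, f n x ≤ f n b := fun n x => sub_le_sub_right (by
    rw [IccExtend_right]
    exact hmono n (projIcc a b hab x).2 (right_mem_Icc.2 hab) (projIcc a b hab x).2.2) _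
  have of_extend : ∀ {u : ℝ → ℝ} {c d x : ℝ}, x ∈ Ioo a b →
      HasDerivAt (fun y => IccExtend hab (u ∘ Subtype.val) y - c) d x →
      HasDerivWithinAt u d (Icc a b) x := fun hx hu =>
    ((IccExtend_comp_val_eventuallyEq hab _ hx).hasDerivAt_iff.1
      ((hasDerivAt_sub_const_iff _).1 hu)).hasDerivWithinAt
  obtain ⟨s, hs, hgood⟩ := (ae_hasSum_deriv_of_monotone hf hF hf_nonneg hf_le).exists_mem
  refine ⟨{a, b} ∪ sᶜ, measure_union_null ((toFinite _).measure_zero _) (mem_ae_iff.1 hs), ?_⟩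
  intro x hx
  rw [← sdiff_sdiff, Set.Icc_sdiff_both, sdiff_compl] at hx
  obtain ⟨hfx, hFx, hderiv⟩ := hgood x hx.2
  exact ⟨_, _, fun n => of_extend hx.1 (hfx n).hasDerivAt, of_extend hx.1 hFx.hasDerivAt, hderiv⟩
end
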